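/- Let P, Q be probability distributions on a finite set with Q full-support, and suppose KL(P‖Q) ≤ δ. Let Q_α(x) := Q(x)^{1+α}/Z(α) and α* = argmin_α CE(P‖Q_α). Then |H(P) − H(Q_{α*})| ≤ δ, where H denotes Shannon entropy. -/

import Mathlib

/-!
Write `Q_t = Q^t / Z(t)` with `Z(t) = ∑ Q^t`, so the paper's `Q_α` is `Q_{1+α}`. Then
`CE(P‖Q_t) = -t 𝔼_P[log Q] + log Z(t)`, and `(log Z)'(t) = 𝔼_{Q_t}[log Q]`. At the minimiser `t*`
the two means of `log Q` therefore agree, which is exactly `CE(P‖Q_{t*}) = H(Q_{t*})`. Gibbs'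
inequality gives `H(P) ≤ CE(P‖Q_{t*})`, and minimality gives
`CE(P‖Q_{t*}) ≤ CE(P‖Q_1) = H(P) + KL(P‖Q) ≤ H(P) + δ`.
-/

open Real Finset

lemma mul_log_div_eq_sub {p q : ℝ} (hq : q ≠ 0) : p * log (p / q) = p * log p - p * log q := by
  rcases eq_or_ne p 0 with rfl | hp
  · simp
  · rw [log_div hp hq]; ring

lemma sub_le_mul_log_div {p r : ℝ} (hp : 0 ≤ p) (hr : 0 < r) : p - r ≤ p * log (p / r) := by
  rcases hp.eq_or_lt with rfl | hp
  · simp [hr.le]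
  · calc p - r = p * (1 - (p / r)⁻¹) := by field_simp
      _ ≤ p * log (p / r) := by gcongr; exact one_sub_inv_le_log_of_pos (by positivity)

section

variable {S : Type*} [Fintype S] {P Q R : S → ℝ}

noncomputable def crossEntropy (P R : S → ℝ) : ℝ := -∑ x, P x * log (R x)

noncomputable def entropy (P : S → ℝ) : ℝ := crossEntropy P P

noncomputable def escort (Q : S → ℝ) (t : ℝ) (x : S) : ℝ := Q x ^ t / ∑ y, Q y ^ t

lemma sum_mul_log_div_eq_crossEntropy_sub_entropy (hQ : ∀ x, Q x ≠ 0) :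
    ∑ x, P x * log (P x / Q x) = crossEntropy P Q - entropy P := by
  simp only [entropy, crossEntropy, mul_log_div_eq_sub (hQ _), sum_sub_distrib]
  ring

lemma entropy_le_crossEntropy (hP0 : ∀ x, 0 ≤ P x) (hP1 : ∑ x, P x = 1)
    (hR0 : ∀ x, 0 < R x) (hR1 : ∑ x, R x = 1) : entropy P ≤ crossEntropy P R := by
  have : ∑ x, (P x - R x) ≤ ∑ x, P x * log (P x / R x) :=
    sum_le_sum fun x _ => sub_le_mul_log_div (hP0 x) (hR0 x)
  rw [sum_sub_distrib, hP1, hR1, sum_mul_log_div_eq_crossEntropy_sub_entropy fun x => (hR0 x).ne']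
    at this
  linarith

lemma sum_rpow_pos [Nonempty S] (hQ : ∀ x, 0 < Q x) (t : ℝ) : 0 < ∑ x, Q x ^ t :=
  sum_pos (fun x _ => rpow_pos_of_pos (hQ x) t) univ_nonempty

lemma escort_pos [Nonempty S] (hQ : ∀ x, 0 < Q x) (t : ℝ) (x : S) : 0 < escort Q t x :=
  div_pos (rpow_pos_of_pos (hQ x) t) (sum_rpow_pos hQ t)

lemma sum_escort [Nonempty S] (hQ : ∀ x, 0 < Q x) (t : ℝ) : ∑ x, escort Q t x = 1 := by
  unfold escort
  rw [← sum_div, div_self (sum_rpow_pos hQ t).ne']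

lemma escort_one (hQ1 : ∑ x, Q x = 1) : escort Q 1 = Q := by
  ext x
  simp [escort, hQ1]

lemma crossEntropy_escort [Nonempty S] (hQ : ∀ x, 0 < Q x) (hR1 : ∑ x, R x = 1) (t : ℝ) :
    crossEntropy R (escort Q t) = -t * ∑ x, R x * log (Q x) + log (∑ x, Q x ^ t) := by
  have hlog : ∀ x, log (escort Q t x) = t * log (Q x) - log (∑ y, Q y ^ t) := fun x => by
    rw [escort, log_div (rpow_pos_of_pos (hQ x) t).ne' (sum_rpow_pos hQ t).ne', log_rpow (hQ x)]
  simp only [crossEntropy, hlog, mul_sub, sum_sub_distrib, ← sum_mul, hR1, mul_left_comm _ t,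
    ← mul_sum]
  ring

lemma hasDerivAt_sum_rpow (hQ : ∀ x, 0 < Q x) (t : ℝ) :
    HasDerivAt (fun s => ∑ x, Q x ^ s) (∑ x, Q x ^ t * log (Q x)) t :=
  HasDerivAt.fun_sum fun x _ => (hasStrictDerivAt_const_rpow (hQ x) t).hasDerivAt

lemma sum_escort_mul_log_eq_of_isMinOn [Nonempty S] (hQ : ∀ x, 0 < Q x) (hP1 : ∑ x, P x = 1)
    {t : ℝ} (hmin : IsMinOn (fun s => crossEntropy P (escort Q s)) Set.univ t) :
    ∑ x, escort Q t x * log (Q x) = ∑ x, P x * log (Q x) := by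
  set c := ∑ x, P x * log (Q x)
  have hf : (fun s => crossEntropy P (escort Q s)) = fun s => -s * c + log (∑ x, Q x ^ s) :=
    funext (crossEntropy_escort hQ hP1)
  have hderiv : HasDerivAt (fun s => -s * c + log (∑ x, Q x ^ s))
      (-1 * c + (∑ x, Q x ^ t * log (Q x)) / ∑ x, Q x ^ t) t :=
    ((hasDerivAt_neg t).mul_const c).add
      ((hasDerivAt_sum_rpow hQ t).log (sum_rpow_pos hQ t).ne')
  rw [hf] at hmin
  have hzero := (hmin.isLocalMin Filter.univ_mem).hasDerivAt_eq_zero hderiv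
  simp only [escort, div_mul_eq_mul_div, ← sum_div]
  linarith

lemma crossEntropy_escort_eq_entropy_of_isMinOn [Nonempty S] (hQ : ∀ x, 0 < Q x)
    (hP1 : ∑ x, P x = 1) {t : ℝ}
    (hmin : IsMinOn (fun s => crossEntropy P (escort Q s)) Set.univ t) :
    crossEntropy P (escort Q t) = entropy (escort Q t) := by
  rw [entropy, crossEntropy_escort hQ hP1, crossEntropy_escort hQ (sum_escort hQ t),
    sum_escort_mul_log_eq_of_isMinOn hQ hP1 hmin]

end

/-- Entropy rate calibration, second claim: if `KL(P‖Q) ≤ δ`, then the entropy of the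
calibrated model `Q_{α*}` is within `δ` of the entropy of `P`. -/
theorem stmt12 {S : Type*} [Fintype S] (P Q : S → ℝ) (αstar δ : ℝ)
    (hP0 : ∀ x, 0 ≤ P x) (hP1 : ∑ x, P x = 1)
    (hQ0 : ∀ x, 0 < Q x) (hQ1 : ∑ x, Q x = 1)
    (hKL : ∑ x, P x * Real.log (P x / Q x) ≤ δ)
    (hmin : ∀ α : ℝ,
      (-∑ x, P x * Real.log (Q x ^ (1 + αstar) / (∑ y, Q y ^ (1 + αstar)))) ≤
        -∑ x, P x * Real.log (Q x ^ (1 + α) / (∑ y, Q y ^ (1 + α)))) :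
    |(-∑ x, P x * Real.log (P x)) -
        (-∑ x, (Q x ^ (1 + αstar) / (∑ y, Q y ^ (1 + αstar))) *
          Real.log (Q x ^ (1 + αstar) / (∑ y, Q y ^ (1 + αstar))))| ≤ δ := by
  obtain ⟨x₀, -, -⟩ := exists_ne_zero_of_sum_ne_zero (hP1 ▸ one_ne_zero)
  have : Nonempty S := ⟨x₀⟩
  have hmin' : IsMinOn (fun s => crossEntropy P (escort Q s)) Set.univ (1 + αstar) :=
    fun s _ => by
      have h := hmin (s - 1)
      rwa [add_sub_cancel] at h
  have hlower : entropy P ≤ crossEntropy P (escort Q (1 + αstar)) :=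
    entropy_le_crossEntropy hP0 hP1 (escort_pos hQ0 _) (sum_escort hQ0 _)
  have hupper : crossEntropy P (escort Q (1 + αstar)) ≤ entropy P + δ :=
    calc crossEntropy P (escort Q (1 + αstar))
        ≤ crossEntropy P (escort Q 1) := hmin' (Set.mem_univ 1)
      _ = crossEntropy P Q := by rw [escort_one hQ1]
      _ ≤ entropy P + δ := by
        rw [sum_mul_log_div_eq_crossEntropy_sub_entropy fun x => (hQ0 x).ne'] at hKL
        linarith
  change |entropy P - entropy (escort Q (1 + αstar))| ≤ δ
  rw [← crossEntropy_escort_eq_entropy_of_isMinOn hQ0 hP1 hmin', abs_le]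
  constructor <;> linarith
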